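/- Let K : [0,1] × [0,1] → [0,1] be a continuous map such that for every t ∈ [0,1] the intermediate path K(−,t) : [0,1] → [0,1] is a zigzag path. Then the length of K(−,t) is independent of t; in particular K(−,0) and K(−,1) are zigzag paths of the same length. (Step (c) of the proof of Theorem 1.7: the length of a controlled path of c𝕀∼ is invariant under hybrid 2-paths.) -/

import Mathlib

open Set

/-- A continuous map `b : [0,1] → [0,1]` is a *zigzag path of length `n`* (see Context). -/
def IsZigzag (b : ℝ → ℝ) (n : ℕ) : Prop :=
  ContinuousOn b (Icc 0 1) ∧ (∀ t ∈ Icc (0:ℝ) 1, b t ∈ Icc (0:ℝ) 1) ∧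
  ((n = 0 ∧ ∀ t ∈ Icc (0:ℝ) 1, b t = 0) ∨
   (1 ≤ n ∧ ∃ t : ℕ → ℝ, t 0 = 0 ∧ t n = 1 ∧
     (∀ i < n, t i < t (i + 1)) ∧
     (∀ i ≤ n, b (t i) = if Odd i then 1 else 0) ∧
     (∀ i, 1 ≤ i → i ≤ n →
       if Odd i then MonotoneOn b (Icc (t (i - 1)) (t i))
       else AntitoneOn b (Icc (t (i - 1)) (t i)))))

/-!
On each monotone piece of a zigzag path of length `n` the path crosses the level `1/2` at most
once, so along any increasing sequence of points the side of `1/2` on which the path lies changes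
at most `n` times, while along its own breakpoints it changes exactly `n` times. Hence two zigzag
paths that are uniformly closer than `1/2` have the same length. By uniform continuity of `K` on
the compact square, the length of `K(-,t)` is therefore locally constant in `t`, hence constant
on the connected interval `[0,1]`.
-/

/-- The number of crossings of the level `1/2` that a zigzag path has completed at a point where
it takes the value `y` on its `i`-th monotone piece (counted from `0`, so increasing iff `i` is
even). -/
noncomputable def zigzagLevel (i : ℕ) (y : ℝ) : ℕ :=
  if (Even i ↔ 1 / 2 < y) then i + 1 else i

lemma odd_zigzagLevel_iff (i : ℕ) (y : ℝ) : Odd (zigzagLevel i y) ↔ 1 / 2 < y := by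
  unfold zigzagLevel
  split_ifs with h
  · rw [Nat.odd_add_one, Nat.not_odd_iff_even, h]
  · rw [← Nat.not_even_iff_odd]
    tauto

lemma zigzagLevel_le_zigzagLevel {i : ℕ} {y z : ℝ} (h : if Even i then y ≤ z else z ≤ y) :
    zigzagLevel i y ≤ zigzagLevel i z := by
  unfold zigzagLevel
  by_cases he : Even i <;> simp only [he, if_true, if_false, true_iff, false_iff] at h ⊢ <;>
    split_ifs <;> first | omega | linarith

def AlternatelyMonotoneOn (b : ℝ → ℝ) (t : ℕ → ℝ) (n : ℕ) : Prop :=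
  ∀ i < n, if Even i then MonotoneOn b (Icc (t i) (t (i + 1)))
    else AntitoneOn b (Icc (t i) (t (i + 1)))

lemma exists_mem_Icc_succ_of_mem_Icc {t : ℕ → ℝ} {n : ℕ} (hn : n ≠ 0) (ht : t 0 ≤ t 1) {u : ℝ}
    (hu : u ∈ Icc (t 0) (t n)) : ∃ i < n, u ∈ Icc (t i) (t (i + 1)) := by
  rcases hu.1.eq_or_lt with rfl | hlt
  · exact ⟨0, Nat.pos_of_ne_zero hn, le_rfl, ht⟩
  · obtain ⟨i, hi, hui⟩ := mem_iUnion₂.1 (Ioc_subset_biUnion_Ioc n t ⟨hlt, hu.2⟩)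
    exact ⟨i, Finset.mem_range.1 hi, Ioc_subset_Icc_self hui⟩

namespace AlternatelyMonotoneOn

variable {b : ℝ → ℝ} {t : ℕ → ℝ} {n : ℕ}

lemma zigzagLevel_lt (hpiece : AlternatelyMonotoneOn b t n) (ht : MonotoneOn t (Iic n))
    {u v : ℝ} {i j : ℕ} (hi : i < n) (hj : j < n) (hu : u ∈ Icc (t i) (t (i + 1)))
    (hv : v ∈ Icc (t j) (t (j + 1))) (huv : u < v) (halt : 1 / 2 < b u ↔ ¬1 / 2 < b v) :
    zigzagLevel i (b u) < zigzagLevel j (b v) := by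
  have hle : zigzagLevel i (b u) ≤ zigzagLevel j (b v) := by
    rcases lt_trichotomy i j with hij | rfl | hji
    · unfold zigzagLevel; split_ifs <;> omega
    · apply zigzagLevel_le_zigzagLevel
      have hpi := hpiece i hi
      split_ifs at hpi ⊢ <;> exact hpi hu hv huv.le
    · have : t (j + 1) ≤ t i := ht (mem_Iic.2 (by omega)) (mem_Iic.2 hi.le) hji
      linarith [hu.1, hv.2]
  refine hle.lt_of_ne fun heq => ?_
  have := congrArg Odd heq
  rw [odd_zigzagLevel_iff, odd_zigzagLevel_iff] at this
  tauto

lemma le_of_alternating (hpiece : AlternatelyMonotoneOn b t n) (ht : MonotoneOn t (Iic n))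
    {s : ℕ → ℝ} {k : ℕ} (hs : ∀ j ≤ k, s j ∈ Icc (t 0) (t n)) (hsm : ∀ j < k, s j < s (j + 1))
    (halt : ∀ j < k, 1 / 2 < b (s j) ↔ ¬1 / 2 < b (s (j + 1))) :
    k ≤ n := by
  rcases Nat.eq_zero_or_pos k with rfl | hk
  · exact Nat.zero_le n
  have hn : n ≠ 0 := by
    rintro rfl
    have h01 : s 0 < s 1 := hsm 0 hk
    have h0 : t 0 ≤ s 0 := (hs 0 (Nat.zero_le k)).1
    have h1 : s 1 ≤ t 0 := (hs 1 hk).2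
    linarith
  have ht01 : t 0 ≤ t 1 := ht (mem_Iic.2 (Nat.zero_le n)) (mem_Iic.2 (by omega)) zero_le_one
  choose! σ hσn hσ using fun j (hj : j ≤ k) => exists_mem_Icc_succ_of_mem_Icc hn ht01 (hs j hj)
  have hlevel : ∀ j ≤ k, j ≤ zigzagLevel (σ j) (b (s j)) := by
    intro j hj
    induction j with
    | zero => exact Nat.zero_le _
    | succ j ih =>
      exact (ih (by omega)).trans_lt <| hpiece.zigzagLevel_lt ht (hσn j (by omega))
        (hσn (j + 1) hj) (hσ j (by omega)) (hσ (j + 1) hj) (hsm j hj) (halt j hj)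
  calc k ≤ zigzagLevel (σ k) (b (s k)) := hlevel k le_rfl
    _ ≤ σ k + 1 := by unfold zigzagLevel; split_ifs <;> omega
    _ ≤ n := hσn k le_rfl

end AlternatelyMonotoneOn

namespace IsZigzag

variable {b f g : ℝ → ℝ} {m n : ℕ}

lemma exists_partition (hb : IsZigzag b n) (hn : n ≠ 0) :
    ∃ t : ℕ → ℝ, t 0 = 0 ∧ t n = 1 ∧ StrictMonoOn t (Iic n) ∧
      (∀ i ≤ n, b (t i) = if Odd i then 1 else 0) ∧ AlternatelyMonotoneOn b t n := by
  obtain ⟨-, -, ⟨rfl, -⟩ | ⟨-, t, ht0, htn, htlt, htv, hpiece⟩⟩ := hb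
  · exact absurd rfl hn
  refine ⟨t, ht0, htn, strictMonoOn_Iic_of_lt_succ fun i hi => ?_, htv, fun i hi => ?_⟩
  · simpa using htlt i hi
  · simpa [Nat.odd_add_one] using hpiece (i + 1) (by omega) (by omega)

lemma le_length_of_alternating (hb : IsZigzag b n) {s : ℕ → ℝ} {k : ℕ}
    (hs : ∀ j ≤ k, s j ∈ Icc 0 1) (hsm : ∀ j < k, s j < s (j + 1))
    (halt : ∀ j < k, 1 / 2 < b (s j) ↔ ¬1 / 2 < b (s (j + 1))) :
    k ≤ n := by
  rcases eq_or_ne n 0 with rfl | hn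
  · obtain ⟨-, -, ⟨-, hzero⟩ | ⟨hpos, -⟩⟩ := hb
    · rcases Nat.eq_zero_or_pos k with rfl | hk
      · rfl
      have hswitch := halt 0 hk
      rw [hzero _ (hs 0 (Nat.zero_le k)), hzero _ (hs 1 hk)] at hswitch
      norm_num at hswitch
    · omega
  obtain ⟨t, ht0, htn, ht, -, hpiece⟩ := hb.exists_partition hn
  exact hpiece.le_of_alternating ht.monotoneOn (by rwa [ht0, htn]) hsm halt

lemma le_length_of_dist_lt (hf : IsZigzag f m) (hg : IsZigzag g n)
    (hfg : ∀ s ∈ Icc (0 : ℝ) 1, dist (f s) (g s) < 1 / 2) : n ≤ m := by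
  rcases eq_or_ne n 0 with rfl | hn
  · exact Nat.zero_le m
  obtain ⟨t, ht0, htn, ht, htv, -⟩ := hg.exists_partition hn
  have htI : ∀ j ≤ n, t j ∈ Icc (0 : ℝ) 1 := fun j hj => by
    rw [← ht0, ← htn]
    exact ⟨ht.monotoneOn (mem_Iic.2 (Nat.zero_le n)) (mem_Iic.2 hj) (Nat.zero_le j),
      ht.monotoneOn (mem_Iic.2 hj) (mem_Iic.2 le_rfl) hj⟩
  have hhigh : ∀ j ≤ n, 1 / 2 < f (t j) ↔ Odd j := fun j hj => by
    have := abs_lt.1 (hfg _ (htI j hj))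
    rw [htv j hj] at this
    split_ifs at this with hodd <;> simp only [hodd, iff_true, iff_false, not_lt] <;> linarith
  refine hf.le_length_of_alternating htI
    (fun j hj => ht (mem_Iic.2 hj.le) (mem_Iic.2 hj) (Nat.lt_succ_self j)) fun j hj => ?_
  rw [hhigh j hj.le, hhigh (j + 1) hj, Nat.odd_add_one, not_not]

lemma length_eq_of_dist_lt (hf : IsZigzag f m) (hg : IsZigzag g n)
    (hfg : ∀ s ∈ Icc (0 : ℝ) 1, dist (f s) (g s) < 1 / 2) : m = n :=
  le_antisymm (hg.le_length_of_dist_lt hf fun s hs => dist_comm (f s) (g s) ▸ hfg s hs)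
    (hf.le_length_of_dist_lt hg hfg)

end IsZigzag

theorem zigzag_length_const_of_homotopy (K : ℝ → ℝ → ℝ)
    (hK : ContinuousOn (fun p : ℝ × ℝ => K p.1 p.2) (Icc 0 1 ×ˢ Icc 0 1))
    (hzig : ∀ t ∈ Icc (0:ℝ) 1, ∃ m, IsZigzag (fun s => K s t) m) :
    ∃ n, ∀ t ∈ Icc (0:ℝ) 1, IsZigzag (fun s => K s t) n := by
  choose! ℓ hℓ using hzig
  obtain ⟨δ, hδ, hK⟩ := Metric.uniformContinuousOn_iff.1
    ((isCompact_Icc.prod isCompact_Icc).uniformContinuousOn_of_continuous hK) (1 / 2) one_half_pos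
  have hlocal : ∀ t ∈ Icc (0 : ℝ) 1, ∀ t' ∈ Icc (0 : ℝ) 1, dist t t' < δ → ℓ t = ℓ t' :=
    fun t ht t' ht' htt' => (hℓ t ht).length_eq_of_dist_lt (hℓ t' ht') fun s hs =>
      hK (s, t) ⟨hs, ht⟩ (s, t') ⟨hs, ht'⟩ (by simpa [Prod.dist_eq] using htt')
  have hcont : ContinuousOn ℓ (Icc 0 1) := Metric.continuousOn_iff.2 fun t ht ε hε =>
    ⟨δ, hδ, fun t' ht' htt' => by rwa [hlocal t' ht' t ht htt', dist_self]⟩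
  refine ⟨ℓ 0, fun t ht => ?_⟩
  rw [isPreconnected_Icc.constant hcont (left_mem_Icc.2 zero_le_one) ht]
  exact hℓ t ht
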